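/- arXiv:1410.4392 — 3 statements merged into one kernel-verified Lean document; each statement's English description precedes it below -/
import Mathlib

section
/- Let X be a smooth vector field on a manifold M, ω a smooth 2-form with L_X ω = 0, Y a symmetry of X (L_X Y = 0), and Z a Y-pseudosymmetry of X (L_X Z = f·Y for some smooth function f). Then Φ = ω(Y, Z) is a conservation law for X, i.e. L_X (ω(Y,Z)) = 0. -/
/- STATEMENT 3: If L_X ω = 0 for a 2-form ω, Y is a symmetry of X and Z is a
Y-pseudosymmetry of X, then Φ = ω(Y,Z) is a conservation law for X. -/

noncomputable section

variable {E : Type*} [NormedAddCommGroup E] [NormedSpace ℝ E]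

/-- Lie bracket of vector fields: `[X,Y] = DY·X - DX·Y`. -/
def vfBracket (X Y : E → E) : E → E :=
  fun x => fderiv ℝ Y x (X x) - fderiv ℝ X x (Y x)

/-- Action of a vector field on a function. -/
def vfDeriv (X : E → E) (f : E → ℝ) : E → ℝ :=
  fun x => fderiv ℝ f x (X x)

/-- Lie derivative of a 2-form along a vector field, evaluated at `x` on vectors `u, v`. -/
def lieDeriv2 (X : E → E) (ω : E → E →L[ℝ] E →L[ℝ] ℝ) (x u v : E) : ℝ :=
  fderiv ℝ ω x (X x) u v + ω x (fderiv ℝ X x u) v + ω x u (fderiv ℝ X x v)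

theorem conservation_law_from_symmetry_and_pseudosymmetry_two_form
    (X Y Z : E → E) (ω : E → E →L[ℝ] E →L[ℝ] ℝ) (f : E → ℝ)
    (hX : ContDiff ℝ (⊤ : ℕ∞) X) (hY : ContDiff ℝ (⊤ : ℕ∞) Y) (hZ : ContDiff ℝ (⊤ : ℕ∞) Z)
    (hω : ContDiff ℝ (⊤ : ℕ∞) ω) (hf : ContDiff ℝ (⊤ : ℕ∞) f)
    (halt : ∀ x u v, ω x u v = - ω x v u)
    (hLω : ∀ x u v, lieDeriv2 X ω x u v = 0)
    (hsymY : vfBracket X Y = 0)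
    (hpseudoZ : ∀ x, vfBracket X Z x = f x • Y x) :
    vfDeriv X (fun x => ω x (Y x) (Z x)) = 0 := by
  funext x
  have hYd := (hY.differentiable (by simp) x).hasFDerivAt
  have hZd := (hZ.differentiable (by simp) x).hasFDerivAt
  have hωd := (hω.differentiable (by simp) x).hasFDerivAt
  have h1 : HasFDerivAt (fun y => ω y (Y y))
      (((ω x).comp (fderiv ℝ Y x)) + (fderiv ℝ ω x).flip (Y x)) x :=
    hωd.clm_apply hYd
  have h2 := h1.clm_apply hZd
  have hbY : fderiv ℝ Y x (X x) = fderiv ℝ X x (Y x) := by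
    have := congrFun hsymY x
    simpa [vfBracket, sub_eq_zero] using this
  have hbZ : fderiv ℝ Z x (X x) = fderiv ℝ X x (Z x) + f x • Y x := by
    have := hpseudoZ x
    simp only [vfBracket, sub_eq_iff_eq_add'] at this
    rw [this, add_comm]
  have hL := hLω x (Y x) (Z x)
  simp only [lieDeriv2] at hL
  simp only [vfDeriv, h2.fderiv, ContinuousLinearMap.add_apply,
    ContinuousLinearMap.coe_comp', Function.comp_apply,
    ContinuousLinearMap.flip_apply, Pi.zero_apply]
  rw [hbY, hbZ]
  simp only [map_add, map_smul, ContinuousLinearMap.add_apply,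
    ContinuousLinearMap.smul_apply]
  have hYY : ω x (Y x) (Y x) = 0 := by
    have := halt x (Y x) (Y x); linarith
  rw [hYY]
  simp only [smul_zero, smul_eq_mul, mul_zero]
  linarith
end
end

section
/- Let (M, ω) be a symplectic manifold with Hamiltonian system X_H. If Y is a symmetry of X_H ([X_H, Y] = 0) and Z is a Y-pseudosymmetry of X_H ([X_H, Z] = f·Y for some smooth f), then Φ = ω(Y, Z) is a conservation law for X_H: X_H(Φ) = 0. -/
/- STATEMENT 7: If Y is a symmetry of X_H and Z is a Y-pseudosymmetry of X_H, then Φ = ω(Y,Z) is a conservation law for the Hamiltonian system: X_H(Φ) = 0. -/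

noncomputable section

variable {E : Type*} [NormedAddCommGroup E] [NormedSpace ℝ E]

/-- Exterior derivative of a 2-form, evaluated at `x` on `u, v, w`. -/
def extDeriv2 (ω : E → E →L[ℝ] E →L[ℝ] ℝ) (x u v w : E) : ℝ :=
  fderiv ℝ ω x u v w - fderiv ℝ ω x v u w + fderiv ℝ ω x w u v

/-- `ω` is a symplectic form: smooth, antisymmetric, nondegenerate and closed. -/
structure IsSymplectic (ω : E → E →L[ℝ] E →L[ℝ] ℝ) : Prop where
  smooth : ContDiff ℝ (⊤ : ℕ∞) ω
  antisymm : ∀ x u v, ω x u v = - ω x v u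
  nondeg : ∀ x u, (∀ v, ω x u v = 0) → u = 0
  closed : ∀ x u v w, extDeriv2 ω x u v w = 0

theorem hamiltonian_conservation_law_from_symmetry_and_pseudosymmetry
    (ω : E → E →L[ℝ] E →L[ℝ] ℝ) (H : E → ℝ) (XH Y Z : E → E) (f : E → ℝ)
    (hω : IsSymplectic ω) (hH : ContDiff ℝ (⊤ : ℕ∞) H) (hXHs : ContDiff ℝ (⊤ : ℕ∞) XH)
    (hY : ContDiff ℝ (⊤ : ℕ∞) Y) (hZ : ContDiff ℝ (⊤ : ℕ∞) Z) (hf : ContDiff ℝ (⊤ : ℕ∞) f)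
    (hXH : ∀ x, ω x (XH x) = - fderiv ℝ H x)
    (hsymY : vfBracket XH Y = 0)
    (hpseudoZ : ∀ x, vfBracket XH Z x = f x • Y x) :
    vfDeriv XH (fun x => ω x (Y x) (Z x)) = 0 := by
  funext x
  have hωd : DifferentiableAt ℝ ω x := hω.smooth.differentiable (by simp) x
  have hXHd : DifferentiableAt ℝ XH x := hXHs.differentiable (by simp) x
  have hYd : DifferentiableAt ℝ Y x := hY.differentiable (by simp) x
  have hZd : DifferentiableAt ℝ Z x := hZ.differentiable (by simp) x
  have hH' : ContDiff ℝ (⊤ : ℕ∞) (fderiv ℝ H) := hH.fderiv_right (by simp)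
  -- derivative of x ↦ ω x (XH x)
  have h1 : HasFDerivAt (fun y => ω y (XH y))
      (((ω x).comp (fderiv ℝ XH x)) + (fderiv ℝ ω x).flip (XH x)) x :=
    hωd.hasFDerivAt.clm_apply hXHd.hasFDerivAt
  have h2 : HasFDerivAt (fun y => ω y (XH y)) (-(fderiv ℝ (fderiv ℝ H) x)) x := by
    have : (fun y => ω y (XH y)) = fun y => -(fderiv ℝ H y) := funext hXH
    rw [this]
    exact ((hH'.differentiable (by simp) x).hasFDerivAt).neg
  have hkey : ((ω x).comp (fderiv ℝ XH x)) + (fderiv ℝ ω x).flip (XH x)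
      = -(fderiv ℝ (fderiv ℝ H) x) := h1.unique h2
  -- pointwise version
  have hkey' : ∀ u v : E, ω x (fderiv ℝ XH x u) v + fderiv ℝ ω x u (XH x) v
      = -(fderiv ℝ (fderiv ℝ H) x u v) := by
    intro u v
    have := congrArg (fun (T : E →L[ℝ] E →L[ℝ] ℝ) => T u v) hkey
    simpa using this
  -- symmetry of the second derivative of H
  have hsymm : ∀ u v : E, fderiv ℝ (fderiv ℝ H) x u v = fderiv ℝ (fderiv ℝ H) x v u :=
    fun u v => second_derivative_symmetric
      (fun y => (hH.differentiable (by simp) y).hasFDerivAt)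
      ((hH'.differentiable (by simp) x).hasFDerivAt) u v
  -- the Lie derivative of ω along XH vanishes
  have hlie : ∀ u v : E, fderiv ℝ ω x (XH x) u v + ω x (fderiv ℝ XH x u) v
      + ω x u (fderiv ℝ XH x v) = 0 := by
    intro u v
    have hcl := hω.closed x (XH x) u v
    unfold extDeriv2 at hcl
    have e1 := hkey' u v
    have e2 := hkey' v u
    have hs := hsymm u v
    have ha := hω.antisymm x u (fderiv ℝ XH x v)
    linarith
  -- derivative of x ↦ ω x (Y x) (Z x)
  have hc : HasFDerivAt (fun y => ω y (Y y))
      (((ω x).comp (fderiv ℝ Y x)) + (fderiv ℝ ω x).flip (Y x)) x :=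
    hωd.hasFDerivAt.clm_apply hYd.hasFDerivAt
  have hg : HasFDerivAt (fun y => ω y (Y y) (Z y))
      (((ω x (Y x)).comp (fderiv ℝ Z x))
        + (((ω x).comp (fderiv ℝ Y x)) + (fderiv ℝ ω x).flip (Y x)).flip (Z x)) x :=
    hc.clm_apply hZd.hasFDerivAt
  have hDY : fderiv ℝ Y x (XH x) = fderiv ℝ XH x (Y x) := by
    have := congrFun hsymY x
    simp only [vfBracket, Pi.zero_apply] at this
    linear_combination (norm := module) this
  have hDZ : fderiv ℝ Z x (XH x) = f x • Y x + fderiv ℝ XH x (Z x) := by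
    have := hpseudoZ x
    simp only [vfBracket] at this
    linear_combination (norm := module) this
  have hωYY : ω x (Y x) (Y x) = 0 := by
    have := hω.antisymm x (Y x) (Y x); linarith
  rw [vfDeriv, hg.fderiv]
  simp only [ContinuousLinearMap.add_apply, ContinuousLinearMap.comp_apply,
    ContinuousLinearMap.flip_apply, hDY, hDZ, map_add, map_smul, smul_eq_mul,
    hωYY, mul_zero, zero_add, Pi.zero_apply]
  have := hlie (Y x) (Z x)
  linarith
end
end

section
/- Let ω_1,…,ω_k be smooth 2-forms on a manifold M and X_1,…,X_k vector fields with L_{X_A} ω_A = 0 for each A. Let Y be a common symmetry of all X_A ([X_A, Y] = 0 for all A) and S a vector field with [X_A, S] = (∑_B λ_A^B)·Y for smooth functions λ_A^B. Then Φ_A = ω_A(S, Y) defines a map Φ = (Φ_1,…,Φ_k) satisfying ∑_{A=1}^k X_A(Φ_A) = 0. -/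
/- STATEMENT 8: Given 2-forms ω_A with L_{X_A} ω_A = 0, a common symmetry Y of all X_A,
and S with [X_A, S] = (∑_B λ_A^B)·Y, the functions Φ_A = ω_A(S,Y) satisfy
∑_A X_A(Φ_A) = 0, i.e. (Φ_1,…,Φ_k) is a conservation law for (X_1,…,X_k). -/

noncomputable section

variable {E : Type*} [NormedAddCommGroup E] [NormedSpace ℝ E]

theorem k_symplectic_conservation_law_from_symmetry_and_pseudosymmetry
    (k : ℕ) (ω : Fin k → E → E →L[ℝ] E →L[ℝ] ℝ)
    (X : Fin k → E → E) (Y S : E → E) (lam : Fin k → Fin k → E → ℝ)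
    (hωs : ∀ A, ContDiff ℝ (⊤ : ℕ∞) (ω A)) (hXs : ∀ A, ContDiff ℝ (⊤ : ℕ∞) (X A))
    (hYs : ContDiff ℝ (⊤ : ℕ∞) Y) (hSs : ContDiff ℝ (⊤ : ℕ∞) S)
    (hlam : ∀ A B, ContDiff ℝ (⊤ : ℕ∞) (lam A B))
    (halt : ∀ A x u v, ω A x u v = - ω A x v u)
    (hLω : ∀ A x u v, lieDeriv2 (X A) (ω A) x u v = 0)
    (hsymY : ∀ A, vfBracket (X A) Y = 0)
    (hpseudoS : ∀ A x, vfBracket (X A) S x = (∑ B, lam A B x) • Y x) :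
    ∀ x, ∑ A, fderiv ℝ (fun y => ω A y (S y) (Y y)) x (X A x) = 0 := by

  intro x
  apply Finset.sum_eq_zero
  intro A _
  have hω := ((hωs A).differentiable (by simp)).differentiableAt (x := x) |>.hasFDerivAt
  have hS := ((hSs).differentiable (by simp)).differentiableAt (x := x) |>.hasFDerivAt
  have hY := ((hYs).differentiable (by simp)).differentiableAt (x := x) |>.hasFDerivAt
  have h1 : HasFDerivAt (fun y => ω A y (S y))
      (((ω A x).comp (fderiv ℝ S x)) + (fderiv ℝ (ω A) x).flip (S x)) x :=
    hω.clm_apply hS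
  have h2 : HasFDerivAt (fun y => ω A y (S y) (Y y))
      (((ω A x (S x)).comp (fderiv ℝ Y x)) +
        ((((ω A x).comp (fderiv ℝ S x)) + (fderiv ℝ (ω A) x).flip (S x)).flip (Y x))) x :=
    h1.clm_apply hY
  have hd : fderiv ℝ (fun y => ω A y (S y) (Y y)) x (X A x)
      = ω A x (S x) (fderiv ℝ Y x (X A x)) + ω A x (fderiv ℝ S x (X A x)) (Y x)
        + fderiv ℝ (ω A) x (X A x) (S x) (Y x) := by
    rw [h2.fderiv]; simp; ring
  have hL := hLω A x (S x) (Y x)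
  unfold lieDeriv2 at hL
  have hYb : fderiv ℝ Y x (X A x) = fderiv ℝ (X A) x (Y x) := by
    have := congrFun (hsymY A) x
    unfold vfBracket at this
    have := sub_eq_zero.mp this
    simpa using this
  have hSb : fderiv ℝ S x (X A x) = fderiv ℝ (X A) x (S x) + (∑ B, lam A B x) • Y x := by
    have := hpseudoS A x
    unfold vfBracket at this
    linear_combination (norm := abel) this
  have hYY : ω A x (Y x) (Y x) = 0 := by
    have := halt A x (Y x) (Y x); linarith
  rw [hd, hYb, hSb]
  simp only [map_add, map_smul, ContinuousLinearMap.add_apply,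
    ContinuousLinearMap.smul_apply, smul_eq_mul, hYY]
  linarith
end
end
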